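/- Burge's doubled identity: for all natural numbers L, M, Σ_{j∈ℤ} (-1)^j q^(j²) [L+M choose L-j]_q [L+M choose L+j]_q = [L+M choose L]_{q²}, where the right side is the Gaussian binomial coefficient in base q². -/

import Mathlib

/-!
Write `S_N(L) = ∑_j (-1)^j q^(j²) [N, L-j] [N, L+j]`. Both `S_N(L)` and `[N, L]_{q²}` vanish for
`N = 0, L ≠ 0`, equal `1` at `N = L = 0`, and satisfy the `q²`-Pascal recurrence
`F_{N+1}(L) = F_N(L-1) + q^(2L) F_N(L)` for every integer `L`. For `S`, expand both binomials of
size `N+1` by the two `q`-Pascal rules into four sums of products of size-`N` binomials, twisted by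
powers `q^(s j + c)`. The fourth is `q^(2L) S_N(L)`; the reflection `j ↦ -j` and the absorption
identity `(1 - q^k) [N, k] = (1 - q^(N+1-k)) [N, k-1]` turn the other three into `S_N(L-1)` plus
twice a sum that the reflection `j ↦ -1-j` sends to its own negative.
-/

open LaurentPolynomial Finset

noncomputable section

/-- Gaussian binomial coefficient with natural indices, in base `x`, defined by the
`q`-Pascal recurrence `[n+1, k+1] = [n, k] + x^(k+1) * [n, k+1]`.  It vanishes for `k > n`. -/
def gaussAux (x : LaurentPolynomial ℤ) : ℕ → ℕ → LaurentPolynomial ℤ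
  | _, 0 => 1
  | 0, _ + 1 => 0
  | n + 1, k + 1 => gaussAux x n k + x ^ (k + 1) * gaussAux x n (k + 1)

/-- The Gaussian binomial coefficient `[n choose k]` in base `x`, for integer indices:
it is zero when `n < 0` or `k < 0` (and, by `gaussAux`, also when `k > n`). -/
def qbin (x : LaurentPolynomial ℤ) (n k : ℤ) : LaurentPolynomial ℤ :=
  if 0 ≤ n ∧ 0 ≤ k then gaussAux x n.toNat k.toNat else 0

/-- `(-1)^j` for an integer `j`, as a Laurent polynomial. -/
def m1 (j : ℤ) : LaurentPolynomial ℤ := ((((-1 : ℤˣ) ^ j : ℤˣ) : ℤ) : LaurentPolynomial ℤ)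

lemma gaussAux_zero_right (x : LaurentPolynomial ℤ) (n : ℕ) : gaussAux x n 0 = 1 := by
  cases n <;> rfl

lemma gaussAux_eq_zero_of_lt (x : LaurentPolynomial ℤ) : ∀ {n k : ℕ}, n < k → gaussAux x n k = 0
  | 0, _ + 1, _ => rfl
  | _ + 1, _ + 1, h => by
    rw [gaussAux, gaussAux_eq_zero_of_lt x (by omega), gaussAux_eq_zero_of_lt x (by omega),
      mul_zero, add_zero]

lemma one_sub_pow_mul_gaussAux_succ (x : LaurentPolynomial ℤ) :
    ∀ n k : ℕ, (1 - x ^ (k + 1)) * gaussAux x n (k + 1) = (1 - x ^ (n - k)) * gaussAux x n k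
  | 0, k => by simp [gaussAux_eq_zero_of_lt x (Nat.succ_pos k)]
  | n + 1, 0 => by
    have ih := one_sub_pow_mul_gaussAux_succ x n 0
    simp only [gaussAux, gaussAux_zero_right, zero_add, pow_one, Nat.sub_zero] at ih ⊢
    linear_combination x * ih
  | n + 1, k + 1 => by
    rcases le_or_gt n k with hnk | hkn
    · rw [gaussAux_eq_zero_of_lt x (by omega : n + 1 < k + 1 + 1), Nat.sub_eq_zero_of_le (by omega)]
      ring
    have ih₁ := one_sub_pow_mul_gaussAux_succ x n (k + 1)
    have ih₀ := one_sub_pow_mul_gaussAux_succ x n k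
    have e₁ : x ^ (k + 1 + 1) * x ^ (n - (k + 1)) = x ^ (n + 1) := by
      rw [← pow_add]; congr 1; omega
    have e₀ : x ^ (k + 1) * x ^ (n - k) = x ^ (n + 1) := by rw [← pow_add]; congr 1; omega
    rw [gaussAux, gaussAux, Nat.add_sub_add_right]
    linear_combination x ^ (k + 1 + 1) * ih₁ + ih₀ + gaussAux x n (k + 1) * (e₀ - e₁)

lemma qbin_of_neg_right (x : LaurentPolynomial ℤ) (n : ℤ) {k : ℤ} (hk : k < 0) : qbin x n k = 0 :=
  if_neg (by omega)

lemma qbin_of_lt (x : LaurentPolynomial ℤ) {n k : ℤ} (h : n < k) : qbin x n k = 0 := by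
  unfold qbin
  split_ifs
  · exact gaussAux_eq_zero_of_lt x (by omega)
  · rfl

lemma qbin_natCast (x : LaurentPolynomial ℤ) (n k : ℕ) : qbin x n k = gaussAux x n k := by
  simp [qbin]

lemma qbin_zero_right (x : LaurentPolynomial ℤ) {n : ℤ} (hn : 0 ≤ n) : qbin x n 0 = 1 := by
  simp [qbin, hn, gaussAux_zero_right]

lemma qbin_zero_left (x : LaurentPolynomial ℤ) (k : ℤ) : qbin x 0 k = if k = 0 then 1 else 0 := by
  rcases lt_trichotomy k 0 with hk | rfl | hk
  · rw [qbin_of_neg_right x 0 hk, if_neg hk.ne]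
  · rw [qbin_zero_right x le_rfl, if_pos rfl]
  · rw [qbin_of_lt x hk, if_neg hk.ne']

lemma qbin_T_pascal (c : ℤ) {n : ℤ} (hn : 0 ≤ n) (k : ℤ) :
    qbin (T c) (n + 1) k = qbin (T c) n (k - 1) + T (c * k) * qbin (T c) n k := by
  obtain ⟨n, rfl⟩ := Int.eq_ofNat_of_zero_le hn
  rcases lt_trichotomy k 0 with hk | rfl | hk
  · simp [qbin_of_neg_right _ _ hk, qbin_of_neg_right _ _ (by omega : k - 1 < 0)]
  · rw [qbin_zero_right _ (by omega), qbin_zero_right _ hn, qbin_of_neg_right _ _ (by omega)]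
    simp
  · obtain ⟨k, rfl⟩ : ∃ k' : ℕ, k = k' + 1 := ⟨(k - 1).toNat, by omega⟩
    rw [add_sub_cancel_right, ← Nat.cast_succ, ← Nat.cast_succ, qbin_natCast, qbin_natCast,
      qbin_natCast, gaussAux, T_pow, mul_comm c]

lemma qbin_T_absorb (c : ℤ) {n : ℤ} (hn : 0 ≤ n) (k : ℤ) :
    (1 - T (c * k)) * qbin (T c) n k = (1 - T (c * (n + 1 - k))) * qbin (T c) n (k - 1) := by
  obtain ⟨n, rfl⟩ := Int.eq_ofNat_of_zero_le hn
  rcases lt_trichotomy k 0 with hk | rfl | hk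
  · simp [qbin_of_neg_right _ _ hk, qbin_of_neg_right _ _ (by omega : k - 1 < 0)]
  · simp [qbin_of_neg_right]
  obtain ⟨k, rfl⟩ : ∃ k' : ℕ, k = k' + 1 := ⟨(k - 1).toNat, by omega⟩
  rcases lt_or_ge n k with hnk | hkn
  · rw [qbin_of_lt _ (by omega), qbin_of_lt _ (by omega : (n : ℤ) < k + 1 - 1)]
    ring
  have h := one_sub_pow_mul_gaussAux_succ (T c) n k
  rw [T_pow, T_pow, ← qbin_natCast, ← qbin_natCast, Nat.cast_sub hkn] at h
  push_cast at h
  rwa [add_sub_cancel_right, show c * (n + 1 - (k + 1)) = (n - k) * c by ring, mul_comm c]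

lemma qbin_T_pascal' (c : ℤ) {n : ℤ} (hn : 0 ≤ n) (k : ℤ) :
    qbin (T c) (n + 1) k = T (c * (n + 1 - k)) * qbin (T c) n (k - 1) + qbin (T c) n k := by
  linear_combination qbin_T_pascal c hn k - qbin_T_absorb c hn k

lemma m1_neg (j : ℤ) : m1 (-j) = m1 j := by
  rw [m1, m1, zpow_neg, Int.units_inv_eq_self]

lemma m1_neg_one_sub (j : ℤ) : m1 (-1 - j) = -m1 j := by
  rw [show -1 - j = -(j + 1) by ring, m1_neg, m1, m1, zpow_add_one]
  push_cast
  ring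

lemma LaurentPolynomial.eq_zero_of_eq_neg {p : LaurentPolynomial ℤ} (h : p = -p) : p = 0 := by
  ext n
  have hn := congr_arg (fun p : LaurentPolynomial ℤ => p.coeff n) h
  simp only [AddMonoidAlgebra.coeff_neg, Finsupp.coe_neg, Pi.neg_apply, AddMonoidAlgebra.coeff_zero,
    Finsupp.coe_zero, Pi.zero_apply] at hn ⊢
  omega

def burgeTerm (N a b s c j : ℤ) : LaurentPolynomial ℤ :=
  m1 j * T (j ^ 2 + s * j + c) * qbin (T 1) N (a - j) * qbin (T 1) N (b + j)

def burgeSum (N a b s c : ℤ) : LaurentPolynomial ℤ :=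
  ∑ᶠ j, burgeTerm N a b s c j

@[fun_prop]
lemma burgeTerm_hasFiniteSupport (N a b s c : ℤ) :
    Function.HasFiniteSupport (burgeTerm N a b s c) := by
  refine (Set.finite_Icc (-b) (N - b)).subset fun j hj => ?_
  by_contra hj'
  rw [Set.mem_Icc, not_and_or, not_le, not_le] at hj'
  refine hj ?_
  rcases hj' with hj' | hj'
  · rw [burgeTerm, qbin_of_neg_right _ N (k := b + j) (by omega), mul_zero]
  · rw [burgeTerm, qbin_of_lt _ (k := b + j) (by omega), mul_zero]

lemma burgeSum_swap (N a b s c : ℤ) : burgeSum N a b s c = burgeSum N b a (-s) c := by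
  rw [burgeSum, ← finsum_comp_equiv (Equiv.neg ℤ)]
  refine finsum_congr fun j => ?_
  rw [burgeTerm, burgeTerm, Equiv.neg_apply, m1_neg]
  ring_nf

lemma burgeSum_sub_one_self_one_eq_zero (N b c : ℤ) : burgeSum N (b - 1) b 1 c = 0 := by
  refine LaurentPolynomial.eq_zero_of_eq_neg ?_
  conv_lhs => rw [burgeSum, ← finsum_comp_equiv (Equiv.subLeft (-1))]
  rw [burgeSum, ← finsum_neg_distrib]
  refine finsum_congr fun j => ?_
  rw [burgeTerm, burgeTerm, Equiv.subLeft_apply, m1_neg_one_sub]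
  ring_nf

lemma burgeTerm_succ_expand {N : ℤ} (hN : 0 ≤ N) (L j : ℤ) :
    burgeTerm (N + 1) L L 0 0 j =
      burgeTerm N (L - 1) (L - 1) 1 (N + 1 - L) j + burgeTerm N L (L - 1) 0 0 j +
        burgeTerm N (L - 1) L 1 L j + T (2 * L) * burgeTerm N L L 0 0 j := by
  have hY := qbin_T_pascal 1 hN (L + j)
  have hX := qbin_T_pascal 1 hN (L - j)
  have hX' := qbin_T_pascal' 1 hN (L - j)
  have e₁ : T (j ^ 2 + 1 * j + (N + 1 - L)) =
      T (j ^ 2 + 0 * j + 0) * (T (1 * (N + 1 - (L - j))) : LaurentPolynomial ℤ) := by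
    rw [← T_add]; ring_nf
  have e₂ : T (j ^ 2 + 1 * j + L) =
      T (j ^ 2 + 0 * j + 0) * (T (1 * (L + j)) : LaurentPolynomial ℤ) := by
    rw [← T_add]; ring_nf
  have e₃ : T (2 * L) = T (1 * (L + j)) * (T (1 * (L - j)) : LaurentPolynomial ℤ) := by
    rw [← T_add]; ring_nf
  simp only [burgeTerm]
  rw [show L - 1 - j = L - j - 1 by ring, show L - 1 + j = L + j - 1 by ring]
  linear_combination (m1 j * T (j ^ 2 + 0 * j + 0) * qbin (T 1) (N + 1) (L - j)) * hY
    + (m1 j * T (j ^ 2 + 0 * j + 0) * qbin (T 1) N (L + j - 1)) * hX'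
    + (m1 j * T (j ^ 2 + 0 * j + 0) * T (1 * (L + j)) * qbin (T 1) N (L + j)) * hX
    - (m1 j * qbin (T 1) N (L - j - 1) * qbin (T 1) N (L + j - 1)) * e₁
    - (m1 j * qbin (T 1) N (L - j - 1) * qbin (T 1) N (L + j)) * e₂
    - (m1 j * T (j ^ 2 + 0 * j + 0) * qbin (T 1) N (L - j) * qbin (T 1) N (L + j)) * e₃

lemma burgeTerm_absorb {N : ℤ} (hN : 0 ≤ N) (a b j : ℤ) :
    burgeTerm N a b 0 0 j =
      burgeTerm N a (b - 1) 0 0 j + burgeTerm N a b 1 b j -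
        burgeTerm N a (b - 1) (-1) (N + 1 - b) j := by
  have h := qbin_T_absorb 1 hN (b + j)
  have e₁ : T (j ^ 2 + 1 * j + b) =
      T (j ^ 2 + 0 * j + 0) * (T (1 * (b + j)) : LaurentPolynomial ℤ) := by
    rw [← T_add]; ring_nf
  have e₂ : T (j ^ 2 + -1 * j + (N + 1 - b)) =
      T (j ^ 2 + 0 * j + 0) * (T (1 * (N + 1 - (b + j))) : LaurentPolynomial ℤ) := by
    rw [← T_add]; ring_nf
  simp only [burgeTerm]
  rw [show b - 1 + j = b + j - 1 by ring]
  linear_combination (m1 j * T (j ^ 2 + 0 * j + 0) * qbin (T 1) N (a - j)) * h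
    - (m1 j * qbin (T 1) N (a - j) * qbin (T 1) N (b + j)) * e₁
    + (m1 j * qbin (T 1) N (a - j) * qbin (T 1) N (b + j - 1)) * e₂

lemma burgeSum_succ_expand {N : ℤ} (hN : 0 ≤ N) (L : ℤ) :
    burgeSum (N + 1) L L 0 0 =
      burgeSum N (L - 1) (L - 1) 1 (N + 1 - L) + burgeSum N L (L - 1) 0 0 +
        burgeSum N (L - 1) L 1 L + T (2 * L) * burgeSum N L L 0 0 := by
  simp only [burgeSum]
  rw [mul_finsum, ← finsum_add_distrib, ← finsum_add_distrib, ← finsum_add_distrib]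
  · exact finsum_congr (burgeTerm_succ_expand hN L)
  all_goals fun_prop

lemma burgeSum_absorb {N : ℤ} (hN : 0 ≤ N) (a b : ℤ) :
    burgeSum N a b 0 0 =
      burgeSum N a (b - 1) 0 0 + burgeSum N a b 1 b - burgeSum N a (b - 1) (-1) (N + 1 - b) := by
  simp only [burgeSum]
  rw [← finsum_add_distrib, ← finsum_sub_distrib]
  · exact finsum_congr (burgeTerm_absorb hN a b)
  all_goals fun_prop

lemma burgeSum_succ {N : ℤ} (hN : 0 ≤ N) (L : ℤ) :
    burgeSum (N + 1) L L 0 0 = burgeSum N (L - 1) (L - 1) 0 0 + T (2 * L) * burgeSum N L L 0 0 := by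
  have h₁ := burgeSum_swap N (L - 1) (L - 1) 1 (N + 1 - L)
  have h₂ := burgeSum_swap N L (L - 1) 0 0
  rw [neg_zero] at h₂
  linear_combination burgeSum_succ_expand hN L + h₁ + h₂ + burgeSum_absorb hN (L - 1) L
    + 2 * burgeSum_sub_one_self_one_eq_zero N L L

lemma burgeSum_zero (L : ℤ) : burgeSum 0 L L 0 0 = qbin (T 2) 0 L := by
  rw [burgeSum, finsum_eq_single _ L fun j hj => by
    simp [burgeTerm, qbin_zero_left, sub_eq_zero, Ne.symm hj]]
  by_cases hL : L = 0
  · simp [burgeTerm, qbin_zero_left, hL, m1]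
  · simp [burgeTerm, qbin_zero_left, hL]

lemma burgeSum_eq_qbin {N : ℤ} (hN : 0 ≤ N) (L : ℤ) : burgeSum N L L 0 0 = qbin (T 2) N L := by
  induction N, hN using Int.leInduction generalizing L with
  | base => exact burgeSum_zero L
  | succ N hN ih => rw [burgeSum_succ hN, ih, ih, qbin_T_pascal 2 hN]

theorem stmt12 (L M : ℕ) :
    (∑ᶠ j : ℤ, m1 j * T (j ^ 2) *
        qbin (T 1) (L + M) (L - j) * qbin (T 1) (L + M) (L + j)) =
      qbin (T 2) (L + M) L := by
  rw [← burgeSum_eq_qbin (by positivity)]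
  simp only [burgeSum, burgeTerm, zero_mul, add_zero]
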